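/- arXiv:0810.3021 — 5 statements merged into one kernel-verified Lean document; each statement's English description precedes it below -/
import Mathlib

section
/- A Hausdorff topological space X is k*-metrizable if and only if X is cs*-metrizable and every compact subset of X is sequentially compact. Likewise, X is k-metrizable if and only if X is cs-metrizable and every compact subset of X is sequentially compact. -/
open Filter Topology Set

universe u

/-- A function `s : Y → X` is cs*-continuous if for every convergent sequence `(y n)` in `Y`
the image sequence `(s (y n))` has an accumulation (cluster) point in `X`. -/
def CsStarContinuous {X Y : Type u} [TopologicalSpace X] [TopologicalSpace Y]
    (s : Y → X) : Prop :=
  ∀ (y : ℕ → Y) (a : Y), Tendsto y atTop (𝓝 a) →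
    ∃ x : X, MapClusterPt x atTop (fun n => s (y n))

/-- A Hausdorff space `X` is k*-metrizable if it is the image of a metrizable space `M`
under a continuous surjection admitting a section which preserves precompact sets. -/
def KStarMetrizable (X : Type u) [TopologicalSpace X] : Prop :=
  ∃ (M : Type u) (_ : MetricSpace M) (f : M → X) (s : X → M),
    Continuous f ∧ Function.Surjective f ∧ (∀ x, f (s x) = x) ∧
    ∀ K : Set X, IsCompact K → IsCompact (closure (s '' K))

/-- A Hausdorff space `X` is cs*-metrizable if it is the image of a metrizable space
under a continuous surjection admitting a cs*-continuous section. -/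
def CsStarMetrizable (X : Type u) [TopologicalSpace X] : Prop :=
  ∃ (M : Type u) (_ : MetricSpace M) (f : M → X) (s : X → M),
    Continuous f ∧ Function.Surjective f ∧ (∀ x, f (s x) = x) ∧
    CsStarContinuous s

/-- A Hausdorff space `X` is cs-metrizable if it is the image of a metrizable space
under a continuous surjection admitting a sequentially continuous section. -/
def CsMetrizable (X : Type u) [TopologicalSpace X] : Prop :=
  ∃ (M : Type u) (_ : MetricSpace M) (f : M → X) (s : X → M),
    Continuous f ∧ Function.Surjective f ∧ (∀ x, f (s x) = x) ∧
    ∀ (x : ℕ → X) (a : X), Tendsto x atTop (𝓝 a) →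
      ∃ m : M, Tendsto (fun n => s (x n)) atTop (𝓝 m)

/-- A Hausdorff space `X` is k-metrizable if it is the image of a metrizable space
under a continuous surjection for which preimages of compact sets are compact. -/
def KMetrizable (X : Type u) [TopologicalSpace X] : Prop :=
  ∃ (M : Type u) (_ : MetricSpace M) (f : M → X),
    Continuous f ∧ Function.Surjective f ∧
    ∀ K : Set X, IsCompact K → IsCompact (f ⁻¹' K)

/-!
Compact subsets of a k*-metrizable space are continuous images of compact metric sets, hence
sequentially compact; conversely, once compacta are sequentially compact, a cs*-section maps each
compact set into a set all of whose sequences cluster, i.e. a relatively compact set. The same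
argument, with the section restricted to its range, turns a cs-section into a k-map.

The substantial step is k ⇒ cs. If `f : M → X` is a k-map, the decomposition space `M / ker f`
makes the quotient map perfect, so it is metrizable by the Hanai–Morita–Stone theorem. The
continuous bijection `M / ker f → X` induces a bijection on compact sets, and a continuous bijection
onto a Hausdorff space is a homeomorphism on compacta such as `{a, x₀, x₁, …}`; so its inverse is
a cs-section. The perfect image is metrized through a countable sequence of open star refinements
built from the "fibres come within distance `r`" neighbourhoods, which generates a uniformity.
-/

open Metric
open scoped SetRel Uniformity

theorem metrizableSpace_of_nhds_hasBasis {Y : Type*} [TopologicalSpace Y] [T0Space Y]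
    (R : ℕ → SetRel Y Y) (hrefl : ∀ k y, (y, y) ∈ R k)
    (hsymm : ∀ k y z, (y, z) ∈ R k → (z, y) ∈ R k) (hcomp : ∀ k, R (k + 1) ○ R (k + 1) ⊆ R k)
    (hbasis : ∀ y, (𝓝 y).HasBasis (fun _ => True) fun k => Prod.mk y ⁻¹' R k) :
    TopologicalSpace.MetrizableSpace Y := by
  have hanti : Antitone R := antitone_nat_of_succ_le fun k ⟨y, z⟩ h => hcomp k ⟨z, h, hrefl _ z⟩
  have hU : (⨅ k, 𝓟 (R k)).HasBasis (fun _ => True) R := hasBasis_iInf_principal hanti.directed_ge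
  let core : UniformSpace.Core Y := UniformSpace.Core.mk' (⨅ k, 𝓟 (R k))
    (fun r hr y => by obtain ⟨k, -, hk⟩ := hU.mem_iff.1 hr; exact hk (hrefl k y))
    (fun r hr => by
      obtain ⟨k, -, hk⟩ := hU.mem_iff.1 hr
      exact hU.mem_iff.2 ⟨k, trivial, fun p hp => hk (hsymm k _ _ hp)⟩)
    (fun r hr => by
      obtain ⟨k, -, hk⟩ := hU.mem_iff.1 hr
      exact ⟨R (k + 1), hU.mem_of_mem trivial, (hcomp k).trans hk⟩)
  have htop : ‹TopologicalSpace Y› = core.toTopologicalSpace :=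
    TopologicalSpace.ext_nhds fun y => by
      rw [core.nhds_toTopologicalSpace]
      exact (hbasis y).eq_of_same_basis (hU.comap _)
  let _ : UniformSpace Y := .ofCoreEq core _ htop
  have : IsCountablyGenerated (𝓤 Y) := isCountablyGenerated_seq R
  exact UniformSpace.metrizableSpace

section ProperImage

variable {M Y : Type*} [MetricSpace M] {f : M → Y}

def fiberNbhd (f : M → Y) (y : Y) (r : ℝ) : Set Y :=
  {z | ∃ a b, f a = y ∧ f b = z ∧ dist a b < r}

def fiberBall (f : M → Y) (y : Y) (r : ℝ) : Set Y :=
  {z | f ⁻¹' {z} ⊆ thickening r (f ⁻¹' {y})}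

lemma mem_fiberNbhd_comm {y z : Y} {r : ℝ} : z ∈ fiberNbhd f y r ↔ y ∈ fiberNbhd f z r :=
  ⟨fun ⟨a, b, ha, hb, h⟩ => ⟨b, a, hb, ha, dist_comm a b ▸ h⟩,
    fun ⟨a, b, ha, hb, h⟩ => ⟨b, a, hb, ha, dist_comm a b ▸ h⟩⟩

lemma fiberNbhd_mono {y : Y} {r s : ℝ} (h : r ≤ s) : fiberNbhd f y r ⊆ fiberNbhd f y s :=
  fun _ ⟨a, b, ha, hb, hab⟩ => ⟨a, b, ha, hb, hab.trans_le h⟩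

lemma mem_fiberNbhd_self (hsurj : f.Surjective) (y : Y) {r : ℝ} (hr : 0 < r) :
    y ∈ fiberNbhd f y r :=
  let ⟨a, ha⟩ := hsurj y
  ⟨a, a, ha, ha, by simpa using hr⟩

lemma isOpen_fiberBall [TopologicalSpace Y] (hf : IsClosedMap f) (y : Y) (r : ℝ) :
    IsOpen (fiberBall f y r) := by
  have : fiberBall f y r = (f '' (thickening r (f ⁻¹' {y}))ᶜ)ᶜ := by
    ext z
    simp only [fiberBall, mem_compl_iff, mem_image, subset_def, mem_preimage,
      mem_singleton_iff, not_exists, not_and]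
    exact ⟨fun h x hx hfx => hx (h x hfx), fun h x hfx => by_contra (h x · hfx)⟩
  rw [this]
  exact (hf _ isOpen_thickening.isClosed_compl).isOpen_compl

lemma mem_fiberBall_self (y : Y) {r : ℝ} (hr : 0 < r) : y ∈ fiberBall f y r :=
  self_subset_thickening hr _

lemma fiberBall_subset_fiberNbhd (hsurj : f.Surjective) (y : Y) (r : ℝ) :
    fiberBall f y r ⊆ fiberNbhd f y r := by
  intro z hz
  obtain ⟨b, rfl⟩ := hsurj z
  obtain ⟨a, ha, hab⟩ := mem_thickening_iff.1 (hz rfl)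
  exact ⟨a, b, ha, rfl, dist_comm a b ▸ hab⟩

lemma mem_fiberNbhd_of_mem_fiberBall (hsurj : f.Surjective) {y₁ y₂ z : Y} {r₁ r₂ : ℝ}
    (h₁ : z ∈ fiberBall f y₁ r₁) (h₂ : z ∈ fiberBall f y₂ r₂) :
    y₂ ∈ fiberNbhd f y₁ (r₁ + r₂) := by
  obtain ⟨c, rfl⟩ := hsurj z
  obtain ⟨a, ha, hca⟩ := mem_thickening_iff.1 (h₁ rfl)
  obtain ⟨b, hb, hcb⟩ := mem_thickening_iff.1 (h₂ rfl)
  refine ⟨a, b, ha, hb, ?_⟩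
  calc dist a b ≤ dist c a + dist c b := dist_triangle_left a b c
    _ < r₁ + r₂ := add_lt_add hca hcb

/-- Fit a thickening of the compact fibre of `y` into `f ⁻¹' V`, and a smaller one into the open
set `f ⁻¹' fiberBall f y (ε / 2)`. -/
lemma exists_fiberNbhd_fiberNbhd_subset [TopologicalSpace Y] (hf : IsProperMap f) {y : Y}
    {V : Set Y} (hV : V ∈ 𝓝 y) : ∃ δ > 0, ∀ z ∈ fiberNbhd f y δ, fiberNbhd f z δ ⊆ V := by
  have hfib : IsCompact (f ⁻¹' {y}) := hf.isCompact_preimage isCompact_singleton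
  obtain ⟨ε, hε, hεV⟩ := hfib.exists_thickening_subset_open (isOpen_interior.preimage hf.continuous)
    fun a (ha : f a = y) => ha ▸ mem_interior_iff_mem_nhds.2 hV
  obtain ⟨ε', hε', hε'V⟩ := hfib.exists_thickening_subset_open
    ((isOpen_fiberBall hf.isClosedMap y (ε / 2)).preimage hf.continuous)
    fun a (ha : f a = y) => ha ▸ mem_fiberBall_self (f := f) y (half_pos hε)
  refine ⟨min ε' (ε / 2), lt_min hε' (half_pos hε), ?_⟩
  rintro z ⟨a, b, ha, rfl, hab⟩ _ ⟨b', c, hb', rfl, hb'c⟩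
  have hz : f b ∈ fiberBall f y (ε / 2) :=
    hε'V (mem_thickening_iff.2 ⟨a, ha, dist_comm a b ▸ hab.trans_le (min_le_left _ _)⟩)
  have hc : c ∈ thickening (min ε' (ε / 2) + ε / 2) (f ⁻¹' {y}) :=
    thickening_thickening_subset _ _ _
      (mem_thickening_iff.2 ⟨b', hz hb', dist_comm b' c ▸ hb'c⟩)
  exact interior_subset (hεV (thickening_mono (by linarith [min_le_right ε' (ε / 2)]) _ hc))

lemma exists_starRefinement [TopologicalSpace Y] (hf : IsProperMap f) (hsurj : f.Surjective)
    (T : Y → Set Y) (hT : ∀ y, T y ∈ 𝓝 y) {r : ℝ} (hr : 0 < r) :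
    ∃ W : Y → Set Y, (∀ y, IsOpen (W y)) ∧ (∀ y, y ∈ W y) ∧ (∀ y, W y ⊆ fiberNbhd f y r) ∧
      ∀ y₁ y₂, (W y₁ ∩ W y₂).Nonempty → ∃ u, W y₁ ∪ W y₂ ⊆ T u := by
  choose δ hδ hδT using fun y => exists_fiberNbhd_fiberNbhd_subset hf (hT y)
  set ρ : Y → ℝ := fun y => min (δ y) r
  have hρ : ∀ y, 0 < ρ y := fun y => lt_min (hδ y) hr
  have hρδ : ∀ y, ρ y ≤ δ y := fun y => min_le_left _ _
  have hρr : ∀ y, ρ y ≤ r := fun y => min_le_right _ _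
  let W : Y → Set Y := fun y => fiberBall f y (ρ y / 2)
  have hWρ : ∀ y, W y ⊆ fiberNbhd f y (ρ y) := fun y =>
    (fiberBall_subset_fiberNbhd hsurj y _).trans (fiberNbhd_mono (half_le_self (hρ y).le))
  -- the ball with the larger radius absorbs the other one
  have absorb : ∀ y₁ y₂, ρ y₂ ≤ ρ y₁ → (W y₁ ∩ W y₂).Nonempty → W y₁ ∪ W y₂ ⊆ T y₁ := by
    rintro y₁ y₂ hle ⟨z, hz₁, hz₂⟩ x (hx | hx)
    · exact hδT y₁ y₁ (mem_fiberNbhd_self hsurj y₁ (hδ y₁))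
        (fiberNbhd_mono (hρδ y₁) (hWρ y₁ hx))
    · have h₂ : y₂ ∈ fiberNbhd f y₁ (δ y₁) :=
        fiberNbhd_mono (by linarith [hρδ y₁]) (mem_fiberNbhd_of_mem_fiberBall hsurj hz₁ hz₂)
      exact hδT y₁ y₂ h₂ (fiberNbhd_mono (hle.trans (hρδ y₁)) (hWρ y₂ hx))
  refine ⟨W, fun y => isOpen_fiberBall hf.isClosedMap y _,
    fun y => mem_fiberBall_self y (half_pos (hρ y)),
    fun y => (hWρ y).trans (fiberNbhd_mono (hρr y)), fun y₁ y₂ h => ?_⟩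
  rcases le_total (ρ y₂) (ρ y₁) with hle | hle
  · exact ⟨y₁, absorb y₁ y₂ hle h⟩
  · exact ⟨y₂, union_comm _ _ ▸ absorb y₂ y₁ hle (inter_comm _ _ ▸ h)⟩

lemma exists_starRefinement_seq [TopologicalSpace Y] (hf : IsProperMap f)
    (hsurj : f.Surjective) :
    ∃ C : ℕ → Y → Set Y, (∀ k y, IsOpen (C k y)) ∧ (∀ k y, y ∈ C k y) ∧
      (∀ k y, C (k + 1) y ⊆ fiberNbhd f y (1 / (k + 1))) ∧
      ∀ k y₁ y₂, (C (k + 1) y₁ ∩ C (k + 1) y₂).Nonempty →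
        ∃ u, C (k + 1) y₁ ∪ C (k + 1) y₂ ⊆ C k u := by
  let Nbhds := {T : Y → Set Y // ∀ y, IsOpen (T y) ∧ y ∈ T y}
  choose W hWopen hWmem hWsub hWstar using fun (T : Nbhds) (k : ℕ) =>
    exists_starRefinement hf hsurj T.1 (fun y => (T.2 y).1.mem_nhds (T.2 y).2) (r := 1 / (k + 1))
      (by positivity)
  let C : ℕ → Nbhds := fun k => Nat.rec ⟨fun _ => univ, fun _ => ⟨isOpen_univ, mem_univ _⟩⟩
    (fun k T => ⟨W T k, fun y => ⟨hWopen T k y, hWmem T k y⟩⟩) k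
  exact ⟨fun k => (C k).1, fun k y => ((C k).2 y).1, fun k y => ((C k).2 y).2,
    fun k => hWsub (C k) k, fun k => hWstar (C k) k⟩

/-- One half of the Hanai–Morita–Stone theorem. -/
theorem IsProperMap.metrizableSpace [TopologicalSpace Y] (hf : IsProperMap f)
    (hsurj : f.Surjective) : TopologicalSpace.MetrizableSpace Y := by
  have : T1Space Y := ⟨fun y => by
    simpa [image_preimage_eq _ hsurj] using
      hf.isClosedMap _ (hf.isCompact_preimage (isCompact_singleton (x := y))).isClosed⟩
  obtain ⟨C, hopen, hmem, hsub, hstar⟩ := exists_starRefinement_seq hf hsurj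
  refine metrizableSpace_of_nhds_hasBasis (fun k => ⋃ u, C k u ×ˢ C k u)
    (fun k y => mem_iUnion.2 ⟨y, hmem k y, hmem k y⟩)
    (fun k y z h => by
      obtain ⟨u, hy, hz⟩ := mem_iUnion.1 h
      exact mem_iUnion.2 ⟨u, hz, hy⟩)
    (fun k => ?_) (fun y => ⟨fun V => ⟨fun hV => ?_, ?_⟩⟩)
  · rintro ⟨x, z⟩ ⟨y, hxy, hyz⟩
    obtain ⟨u₁, hx, hy₁⟩ := mem_iUnion.1 hxy
    obtain ⟨u₂, hy₂, hz⟩ := mem_iUnion.1 hyz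
    obtain ⟨u, hu⟩ := hstar k u₁ u₂ ⟨y, hy₁, hy₂⟩
    exact mem_iUnion.2 ⟨u, hu (Or.inl hx), hu (Or.inr hz)⟩
  · obtain ⟨δ, hδ, hδV⟩ := exists_fiberNbhd_fiberNbhd_subset hf hV
    obtain ⟨k, hk⟩ := exists_nat_one_div_lt hδ
    refine ⟨k + 1, trivial, fun z hz => ?_⟩
    obtain ⟨u, hy, hz⟩ := mem_iUnion.1 hz
    exact hδV u (fiberNbhd_mono hk.le (mem_fiberNbhd_comm.1 (hsub k u hy)))
      (fiberNbhd_mono hk.le (hsub k u hz))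
  · rintro ⟨k, -, hk⟩
    exact Filter.mem_of_superset ((hopen k y).mem_nhds (hmem k y))
      (fun z hz => hk (mem_iUnion.2 ⟨y, hmem k y, hz⟩))

end ProperImage

section Sequences

variable {X Y : Type*} [TopologicalSpace X] [TopologicalSpace Y]

theorem seqContinuous_of_forall_exists_tendsto [T2Space Y] {s : X → Y}
    (hs : ∀ (x : ℕ → X) (a : X), Tendsto x atTop (𝓝 a) → ∃ m, Tendsto (s ∘ x) atTop (𝓝 m)) :
    SeqContinuous s := by
  intro x a hx
  -- interleave `x` with the constant sequence `a`
  let z : ℕ → X := fun n => if Even n then x (n / 2) else a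
  have hz : Tendsto z atTop (𝓝 a) :=
    ((hx.comp (Nat.tendsto_div_const_atTop two_ne_zero)).mono_left inf_le_left).if
      (tendsto_const_nhds.mono_left inf_le_left)
  obtain ⟨m, hm⟩ := hs z a hz
  have hodd : Tendsto (fun n => s (z (2 * n + 1))) atTop (𝓝 m) :=
    hm.comp (StrictMono.tendsto_atTop fun i j (h : i < j) => by omega)
  have heven : Tendsto (fun n => s (z (2 * n))) atTop (𝓝 m) :=
    hm.comp (StrictMono.tendsto_atTop fun i j (h : i < j) => by omega)
  simp only [z, Nat.not_even_two_mul_add_one, even_two_mul, if_false, if_true,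
    Nat.mul_div_cancel_left _ two_pos] at hodd heven
  rw [tendsto_nhds_unique tendsto_const_nhds hodd]
  exact heven

theorem Equiv.seqContinuous_symm_of_isCompact [T2Space X] (e : Y ≃ X) (he : Continuous e)
    (hK : ∀ K, IsCompact K → IsCompact (e.symm '' K)) : SeqContinuous e.symm := by
  intro x a hx
  refine tendsto_nhds.2 fun A hA haA => ?_
  set L := e.symm '' insert a (range x)
  have hLA : IsClosed (e '' (L \ A)) :=
    ((hK _ hx.isCompact_insert_range).diff hA |>.image he).isClosed
  have ha : a ∉ e '' (L \ A) := by
    rintro ⟨y, hy, rfl⟩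
    exact hy.2 (by simpa using haA)
  filter_upwards [hx.eventually (hLA.isOpen_compl.mem_nhds ha)] with n hn
  by_contra hnA
  exact hn ⟨e.symm (x n), ⟨mem_image_of_mem _ (mem_insert_of_mem _ (mem_range_self n)), hnA⟩,
    e.apply_symm_apply _⟩

end Sequences

theorem isCompact_closure_of_forall_exists_mapClusterPt {M : Type*} [PseudoMetricSpace M]
    {S : Set M} (hS : ∀ y : ℕ → M, (∀ n, y n ∈ S) → ∃ c, MapClusterPt c atTop y) :
    IsCompact (closure S) := by
  refine IsSeqCompact.isCompact fun z hz => ?_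
  choose y hyS hyz using fun n =>
    Metric.mem_closure_iff.1 (hz n) (1 / (n + 1)) Nat.one_div_pos_of_nat
  obtain ⟨c, hc⟩ := hS y hyS
  obtain ⟨ψ, hψ, hyc⟩ := hc.tendsto_subseq
  have hdist : Tendsto (fun n => dist (y (ψ n)) (z (ψ n))) atTop (𝓝 0) :=
    squeeze_zero (fun _ => dist_nonneg) (fun n => (dist_comm (y (ψ n)) _).trans_le (hyz (ψ n)).le)
      (tendsto_one_div_add_atTop_nhds_zero_nat.comp hψ.tendsto_atTop)
  exact ⟨c, mem_closure_of_tendsto hyc (.of_forall fun n => hyS _), ψ, hψ,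
    hyc.congr_dist hdist⟩

section Metrizability

variable {X : Type u} [TopologicalSpace X]

theorem KStarMetrizable.csStarMetrizable (h : KStarMetrizable X) : CsStarMetrizable X := by
  obtain ⟨M, _, f, s, hf, hfs, hsec, hK⟩ := h
  refine ⟨M, _, f, s, hf, hfs, hsec, fun y a hy => ?_⟩
  obtain ⟨c, -, φ, hφ, hc⟩ := (hK _ hy.isCompact_insert_range).tendsto_subseq
    fun n => subset_closure (mem_image_of_mem s (mem_insert_of_mem _ (mem_range_self n)))
  exact ⟨c, hc.mapClusterPt.of_comp hφ.tendsto_atTop⟩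

theorem KStarMetrizable.isSeqCompact [T2Space X] (h : KStarMetrizable X) {K : Set X}
    (hK : IsCompact K) : IsSeqCompact K := by
  obtain ⟨M, _, f, s, hf, -, hsec, hsK⟩ := h
  have : f '' (closure (s '' K) ∩ f ⁻¹' K) = K :=
    (image_inter_preimage f _ K).trans (inter_eq_right.2 fun x hx =>
      ⟨s x, subset_closure (mem_image_of_mem s hx), hsec x⟩)
  exact this ▸ ((hsK K hK).inter_right (hK.isClosed.preimage hf)).isSeqCompact.image
    hf.seqContinuous

theorem CsStarMetrizable.kStarMetrizable (h : CsStarMetrizable X)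
    (hseq : ∀ K : Set X, IsCompact K → IsSeqCompact K) : KStarMetrizable X := by
  obtain ⟨M, _, f, s, hf, hfs, hsec, hs⟩ := h
  refine ⟨M, _, f, s, hf, hfs, hsec, fun K hK => ?_⟩
  refine isCompact_closure_of_forall_exists_mapClusterPt fun y hy => ?_
  choose x hxK hxy using hy
  obtain rfl : s ∘ x = y := funext hxy
  obtain ⟨a, -, φ, hφ, hxa⟩ := hseq K hK hxK
  obtain ⟨c, hc⟩ := hs _ a hxa
  exact ⟨c, hc.of_comp hφ.tendsto_atTop⟩

theorem KMetrizable.isSeqCompact (h : KMetrizable X) {K : Set X} (hK : IsCompact K) :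
    IsSeqCompact K := by
  obtain ⟨M, _, f, hf, hfs, hfK⟩ := h
  exact image_preimage_eq K hfs ▸ (hfK K hK).isSeqCompact.image hf.seqContinuous

theorem CsMetrizable.kMetrizable (h : CsMetrizable X)
    (hseq : ∀ K : Set X, IsCompact K → IsSeqCompact K) : KMetrizable X := by
  obtain ⟨M, _, f, s, hf, -, hsec, hs⟩ := h
  have hs : SeqContinuous s := seqContinuous_of_forall_exists_tendsto hs
  refine ⟨range s, inferInstance, fun m => f m, hf.comp continuous_subtype_val,
    fun x => ⟨⟨s x, mem_range_self x⟩, hsec x⟩, fun K hK => ?_⟩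
  have : (fun m : range s => f m) ⁻¹' K = Subtype.val ⁻¹' (s '' K) := by
    ext ⟨_, x, rfl⟩
    simp [hsec, Function.LeftInverse.injective (g := f) hsec |>.eq_iff]
  rw [this, Subtype.isCompact_iff, Subtype.image_preimage_coe,
    inter_eq_right.2 (image_subset_range s K)]
  exact ((hseq K hK).image hs).isCompact

theorem csMetrizable_of_seqContinuous_section {N : Type u} [TopologicalSpace N]
    [TopologicalSpace.MetrizableSpace N] {g : N → X} {s : X → N} (hg : Continuous g)
    (hgs : ∀ x, g (s x) = x) (hs : SeqContinuous s) : CsMetrizable X :=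
  ⟨N, TopologicalSpace.metrizableSpaceMetric N, g, s, hg, fun x => ⟨s x, hgs x⟩, hgs,
    fun _ a hx => ⟨s a, hs hx⟩⟩

theorem KMetrizable.csMetrizable [T2Space X] (h : KMetrizable X) : CsMetrizable X := by
  obtain ⟨M, _, f, hf, hfs, hfK⟩ := h
  let e := Setoid.quotientKerEquivOfSurjective f hfs
  have he : Continuous e := isQuotientMap_quotient_mk'.continuous_iff.2 hf
  have : T2Space (Quotient (Setoid.ker f)) := .of_injective_continuous e.injective he
  have hπ : IsProperMap (Quotient.mk (Setoid.ker f)) := by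
    refine isProperMap_iff_isCompact_preimage.2 ⟨continuous_quotient_mk', fun K hK => ?_⟩
    rw [← e.preimage_image K]
    exact hfK _ (hK.image he)
  have : TopologicalSpace.MetrizableSpace (Quotient (Setoid.ker f)) :=
    hπ.metrizableSpace Quotient.mk_surjective
  refine csMetrizable_of_seqContinuous_section he e.apply_symm_apply
    (e.seqContinuous_symm_of_isCompact he fun K hK => ?_)
  rw [e.image_symm_eq_preimage, ← image_preimage_eq (e ⁻¹' K) Quotient.mk_surjective]
  exact (hfK K hK).image continuous_quotient_mk'

end Metrizability

/-- A Hausdorff space is k*-metrizable iff it is cs*-metrizable and all its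
compact subsets are sequentially compact; likewise it is k-metrizable iff it is
cs-metrizable and all its compact subsets are sequentially compact. -/
theorem stmt_7 {X : Type u} [TopologicalSpace X] [T2Space X] :
    (KStarMetrizable X ↔
      CsStarMetrizable X ∧ ∀ K : Set X, IsCompact K → IsSeqCompact K) ∧
    (KMetrizable X ↔
      CsMetrizable X ∧ ∀ K : Set X, IsCompact K → IsSeqCompact K) := by
  exact ⟨⟨fun h => ⟨h.csStarMetrizable, fun _ => h.isSeqCompact⟩,
      fun ⟨h, hseq⟩ => h.kStarMetrizable hseq⟩,
    ⟨fun h => ⟨h.csMetrizable, fun _ => h.isSeqCompact⟩, fun ⟨h, hseq⟩ => h.kMetrizable hseq⟩⟩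
end

section
/- A Hausdorff topological space X is cs*-metrizable if and only if X has a σ-cs-finite cl₁-osed cs*-network, i.e. a family 𝒩 of subsets of X which is a countable union of cs-finite subfamilies and such that for every open set U ⊆ X and every sequence (x_n) of points of U converging to a point x ∈ U there is a set N ∈ 𝒩 with cl₁(N) ⊆ U that contains x_n for infinitely many n. -/
/-!
If `f : M → X` has a cs*-continuous section `s`, pull back locally finite open covers `Vₙ` of the
metric space `M` of mesh `→ 0`. A convergent sequence together with its limit is mapped by `s`
into a set all of whose sequences cluster, so it meets only finitely many members of `Vₙ`; and
`cl₁ (s⁻¹ V) ⊆ f (closure V)` because `f` sends cluster points of `s ∘ x` to the limit of `x`.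

Conversely, code `x` by the sequence `n ↦ ⋂ {S ∈ Fₙ | x ∈ S}` in the product of countably many
discrete copies of `Set X`. Take for `M` the codes `c` such that the sets `cl₁ (c n)` form a
network at some point, which is unique by the Hausdorff property, and for `f` the map to that
point. Along a convergent sequence, cs-finiteness of `Fₙ` lets the `n`-th coordinate of the codes
take only finitely many values, so the codes have a convergent subsequence, and the network
property of `⋃ Fₙ` shows that its limit is again a code, of the limit point.
-/

open Filter Topology Set

universe u

/-- A family of sets is cs-finite if every convergent sequence together with its limit
meets only finitely many members of the family. -/
def CsFinite {X : Type u} [TopologicalSpace X] (𝓕 : Set (Set X)) : Prop :=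
  ∀ (x : ℕ → X) (a : X), Tendsto x atTop (𝓝 a) →
    {N ∈ 𝓕 | (N ∩ (Set.range x ∪ {a})).Nonempty}.Finite

theorem seqClosure_mono {X : Type*} [TopologicalSpace X] {s t : Set X} (h : s ⊆ t) :
    seqClosure s ⊆ seqClosure t :=
  fun _ ⟨x, hxs, hx⟩ => ⟨x, fun n => h (hxs n), hx⟩

theorem MapClusterPt.eq_of_tendsto {X ι : Type*} [TopologicalSpace X] [T2Space X]
    {l : Filter ι} {u : ι → X} {a b : X} (hb : MapClusterPt b l u) (ha : Tendsto u l (𝓝 a)) :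
    b = a :=
  eq_of_nhds_neBot (hb.neBot.mono (inf_le_inf_left _ ha))

theorem MapClusterPt.mem_closure_of_forall_mem {X ι : Type*} [TopologicalSpace X]
    {l : Filter ι} {u : ι → X} {b : X} {s : Set X} (hb : MapClusterPt b l u)
    (hu : ∀ i, u i ∈ s) : b ∈ closure s :=
  mem_closure_iff_clusterPt.2 <| hb.clusterPt.mono <| le_principal_iff.2 <|
    mem_map.2 <| Eventually.of_forall hu

theorem LocallyFinite.finite_nonempty_inter_of_forall_mapClusterPt {X κ : Type*}
    [TopologicalSpace X] {v : κ → Set X} (hv : LocallyFinite v) {s : Set X}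
    (hs : ∀ u : ℕ → X, (∀ n, u n ∈ s) → ∃ p, MapClusterPt p atTop u) :
    {j | (v j ∩ s).Nonempty}.Finite := by
  by_contra hinf
  let e := Set.Infinite.natEmbedding _ hinf
  choose z hzv hzs using fun i => (e i).2
  obtain ⟨p, hp⟩ := hs z hzs
  obtain ⟨W, hW, hWfin⟩ := hv p
  have hfreq : {i | z i ∈ W}.Infinite :=
    Nat.frequently_atTop_iff_infinite.1 (mapClusterPt_iff_frequently.1 hp W hW)
  refine hfreq (((hWfin.preimage (Subtype.val_injective.comp e.injective).injOn)).subset ?_)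
  exact fun i hi => ⟨z i, hzv i, hi⟩

theorem tendsto_of_mem_insert_range_of_finite_fibers {X : Type*} [TopologicalSpace X]
    {x y : ℕ → X} {a : X} (hx : Tendsto x atTop (𝓝 a)) (hy : ∀ i, y i ∈ insert a (range x))
    (hfib : ∀ b, {i | y i = b}.Finite) : Tendsto y atTop (𝓝 a) := by
  intro W hW
  rw [← Nat.cofinite_eq_atTop] at hx ⊢
  have hxW : {k | x k ∉ W}.Finite := hx hW
  have hyW : {i | y i ∉ W} ⊆ ⋃ b ∈ x '' {k | x k ∉ W}, {i | y i = b} := by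
    intro i hi
    obtain ⟨k, hk⟩ : y i ∈ range x :=
      (hy i).resolve_left fun h => hi (h ▸ mem_of_mem_nhds hW)
    exact mem_biUnion ⟨k, by simpa [hk] using hi, hk⟩ rfl
  exact ((hxW.image x).biUnion fun b _ => hfib b).subset hyW

def IsSigmaCsFinite {X : Type u} [TopologicalSpace X] (𝒩 : Set (Set X)) : Prop :=
  ∃ F : ℕ → Set (Set X), 𝒩 = ⋃ n, F n ∧ ∀ n, CsFinite (F n)

def IsSeqClosedCsStarNetwork {X : Type u} [TopologicalSpace X] (𝒩 : Set (Set X)) : Prop :=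
  ∀ U : Set X, IsOpen U → ∀ (x : ℕ → X) (a : X),
    Tendsto x atTop (𝓝 a) → a ∈ U → (∀ n, x n ∈ U) →
    ∃ N ∈ 𝒩, seqClosure N ⊆ U ∧ {n | x n ∈ N}.Infinite

section Forward

variable {X M : Type u} [TopologicalSpace X] [TopologicalSpace M] {s : X → M}

theorem CsStarContinuous.exists_mapClusterPt_of_mem_insert_range (hs : CsStarContinuous s)
    {x y : ℕ → X} {a : X} (hx : Tendsto x atTop (𝓝 a)) (hy : ∀ i, y i ∈ insert a (range x)) :
    ∃ p, MapClusterPt p atTop (s ∘ y) := by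
  by_cases hfib : ∀ b, {i | y i = b}.Finite
  · exact hs y a (tendsto_of_mem_insert_range_of_finite_fibers hx hy hfib)
  · obtain ⟨b, hb⟩ := not_forall.1 hfib
    refine ⟨s b, mapClusterPt_iff_frequently.2 fun W hW => ?_⟩
    refine (Nat.frequently_atTop_iff_infinite.2 hb).mono fun i hi => ?_
    simpa [hi] using mem_of_mem_nhds hW

theorem CsStarContinuous.csFinite_range_preimage {κ : Type*} (hs : CsStarContinuous s)
    {v : κ → Set M} (hv : LocallyFinite v) : CsFinite (range fun j => s ⁻¹' v j) := by
  intro x a hx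
  have hfin : {j | (v j ∩ s '' insert a (range x)).Nonempty}.Finite := by
    refine hv.finite_nonempty_inter_of_forall_mapClusterPt fun u hu => ?_
    choose y hy hyu using hu
    simpa [Function.comp_def, hyu] using hs.exists_mapClusterPt_of_mem_insert_range hx hy
  refine (hfin.image fun j => s ⁻¹' v j).subset ?_
  rintro N ⟨⟨j, rfl⟩, z, hzv, hz⟩
  exact ⟨j, ⟨s z, hzv, z, by simpa [or_comm] using hz, rfl⟩, rfl⟩

variable [T2Space X] {f : M → X}

theorem apply_eq_of_mapClusterPt_comp (hf : Continuous f) (hfs : ∀ x, f (s x) = x)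
    {x : ℕ → X} {a : X} (hx : Tendsto x atTop (𝓝 a)) {m : M}
    (hm : MapClusterPt m atTop (s ∘ x)) : f m = a := by
  have := hm.continuousAt_comp hf.continuousAt
  rw [← Function.comp_assoc, show f ∘ s = id from funext hfs] at this
  exact this.eq_of_tendsto hx

theorem seqClosure_preimage_subset_image_closure (hf : Continuous f) (hfs : ∀ x, f (s x) = x)
    (hs : CsStarContinuous s) (V : Set M) : seqClosure (s ⁻¹' V) ⊆ f '' closure V := by
  rintro z ⟨w, hwV, hwz⟩
  obtain ⟨p, hp⟩ := hs w z hwz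
  exact ⟨p, hp.mem_closure_of_forall_mem hwV, apply_eq_of_mapClusterPt_comp hf hfs hwz hp⟩

end Forward

theorem CsStarMetrizable.exists_isSigmaCsFinite_isSeqClosedCsStarNetwork {X : Type u}
    [TopologicalSpace X] [T2Space X] (h : CsStarMetrizable X) :
    ∃ 𝒩 : Set (Set X), IsSigmaCsFinite 𝒩 ∧ IsSeqClosedCsStarNetwork 𝒩 := by
  obtain ⟨M, _, f, s, hf, -, hfs, hs⟩ := h
  have hcover (n : ℕ) : ∃ v : M → Set M, (∀ j, IsOpen (v j)) ∧ (⋃ j, v j) = univ ∧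
      LocallyFinite v ∧ ∀ j, v j ⊆ Metric.ball j (1 / (n + 1)) :=
    precise_refinement _ (fun _ => Metric.isOpen_ball)
      (iUnion_eq_univ_iff.2 fun j => ⟨j, Metric.mem_ball_self Nat.one_div_pos_of_nat⟩)
  choose v hvopen hvcover hvlf hvball using hcover
  refine ⟨⋃ n, range fun j => s ⁻¹' v n j, ⟨_, rfl, fun n => hs.csFinite_range_preimage (hvlf n)⟩,
    fun U hU x a hx haU _ => ?_⟩
  obtain ⟨m, hm⟩ := hs x a hx
  have hmU : m ∈ f ⁻¹' U := by
    rw [mem_preimage, apply_eq_of_mapClusterPt_comp hf hfs hx hm]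
    exact haU
  obtain ⟨ε, hε, hball⟩ := Metric.isOpen_iff.1 (hU.preimage hf) m hmU
  obtain ⟨n, hn⟩ := exists_nat_one_div_lt (half_pos hε)
  obtain ⟨j, hj⟩ := iUnion_eq_univ_iff.1 (hvcover n) m
  -- `v n j ⊆ ball j r` with `m ∈ v n j` and `2 r < ε`, so `closedBall j r ⊆ ball m ε`
  have hclosure : closure (v n j) ⊆ f ⁻¹' U :=
    (closure_mono (hvball n j)).trans <| Metric.closure_ball_subset_closedBall.trans <|
      (Metric.closedBall_subset_ball' (by
        linarith [Metric.mem_ball.1 (hvball n j hj), dist_comm j m])).trans hball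
  refine ⟨s ⁻¹' v n j, mem_iUnion.2 ⟨n, j, rfl⟩, ?_, ?_⟩
  · refine (seqClosure_preimage_subset_image_closure hf hfs hs _).trans ?_
    exact image_subset_iff.2 hclosure
  · exact Nat.frequently_atTop_iff_infinite.1
      (mapClusterPt_iff_frequently.1 hm _ ((hvopen n j).mem_nhds hj))

section Converse

variable {X : Type u}

def sInterContaining (𝓕 : Set (Set X)) (x : X) : Set X := ⋂₀ {S ∈ 𝓕 | x ∈ S}

theorem mem_sInterContaining (𝓕 : Set (Set X)) (x : X) : x ∈ sInterContaining 𝓕 x :=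
  mem_sInter.2 fun _ hS => hS.2

theorem sInterContaining_subset {𝓕 : Set (Set X)} {S : Set X} {x : X} (hS : S ∈ 𝓕)
    (hx : x ∈ S) : sInterContaining 𝓕 x ⊆ S :=
  sInter_subset_of_mem ⟨hS, hx⟩

variable [TopologicalSpace X]

theorem CsFinite.finite_range_sInterContaining {𝓕 : Set (Set X)} (h𝓕 : CsFinite 𝓕)
    {x : ℕ → X} {a : X} (hx : Tendsto x atTop (𝓝 a)) :
    (range fun k => sInterContaining 𝓕 (x k)).Finite := by
  refine ((h𝓕 x a hx).finite_subsets.image sInter).subset ?_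
  rintro _ ⟨k, rfl⟩
  exact ⟨{S ∈ 𝓕 | x k ∈ S}, fun S hS => ⟨hS.1, x k, hS.2, Or.inl ⟨k, rfl⟩⟩, rfl⟩

def IsSeqClosureNetworkAt (c : ℕ → Set X) (x : X) : Prop :=
  (∀ n, x ∈ seqClosure (c n)) ∧ ∀ U, IsOpen U → x ∈ U → ∃ n, seqClosure (c n) ⊆ U

theorem IsSeqClosureNetworkAt.eq_of_forall_mem [T2Space X] {c : ℕ → Set X} {x y : X}
    (hc : IsSeqClosureNetworkAt c x) (hy : ∀ n, y ∈ seqClosure (c n)) : y = x := by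
  by_contra hne
  obtain ⟨U, V, hU, -, hxU, hyV, hUV⟩ := t2_separation (Ne.symm hne)
  obtain ⟨n, hn⟩ := hc.2 U hU hxU
  exact hUV.notMem_of_mem_left (hn (hy n)) hyV

theorem IsSeqClosedCsStarNetwork.isSeqClosureNetworkAt {F : ℕ → Set (Set X)}
    (hnet : IsSeqClosedCsStarNetwork (⋃ n, F n)) {x : ℕ → X} {a : X}
    (hx : Tendsto x atTop (𝓝 a)) {c : ℕ → Set X}
    (hc : ∀ n, ∀ᶠ k in atTop, sInterContaining (F n) (x k) = c n) :
    IsSeqClosureNetworkAt c a := by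
  constructor
  · intro n
    obtain ⟨k₀, hk₀⟩ := eventually_atTop.1 (hc n)
    refine ⟨fun k => x (k + k₀), fun k => ?_, hx.comp (tendsto_add_atTop_nat k₀)⟩
    rw [← hk₀ (k + k₀) (Nat.le_add_left _ _)]
    exact mem_sInterContaining _ _
  · intro U hU haU
    obtain ⟨k₀, hk₀⟩ := eventually_atTop.1 (hx (hU.mem_nhds haU))
    obtain ⟨N, hN, hNU, hNinf⟩ := hnet U hU (fun k => x (k + k₀)) a
      (hx.comp (tendsto_add_atTop_nat k₀)) haU fun k => hk₀ _ (Nat.le_add_left _ _)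
    obtain ⟨n, hNn⟩ := mem_iUnion.1 hN
    obtain ⟨k₁, hk₁⟩ := eventually_atTop.1 (hc n)
    obtain ⟨k, hkN, hk⟩ := hNinf.exists_gt k₁
    refine ⟨n, (seqClosure_mono ?_).trans hNU⟩
    rw [← hk₁ (k + k₀) (by omega)]
    exact sInterContaining_subset hNn hkN

abbrev NetworkCode (X : Type u) [TopologicalSpace X] : Type u :=
  {c : ℕ → Set X // ∃ x, IsSeqClosureNetworkAt c x}

noncomputable def NetworkCode.limit (c : NetworkCode X) : X := c.2.choose

theorem NetworkCode.isSeqClosureNetworkAt_limit (c : NetworkCode X) :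
    IsSeqClosureNetworkAt c.1 c.limit :=
  c.2.choose_spec

theorem NetworkCode.continuous_limit [TopologicalSpace (Set X)] [DiscreteTopology (Set X)] :
    Continuous (NetworkCode.limit (X := X)) := by
  refine continuous_iff_continuousAt.2 fun c U hU => mem_map.2 ?_
  obtain ⟨V, hVU, hV, hcV⟩ := mem_nhds_iff.1 hU
  obtain ⟨n, hn⟩ := c.isSeqClosureNetworkAt_limit.2 V hV hcV
  have hcyl : ∀ᶠ d in 𝓝 c, (d : NetworkCode X).1 n = c.1 n :=
    ((continuous_apply n).comp continuous_subtype_val).continuousAt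
      ((isOpen_discrete {c.1 n}).mem_nhds rfl)
  filter_upwards [hcyl] with d hd
  exact hVU (hn (hd ▸ d.isSeqClosureNetworkAt_limit.1 n))

variable {F : ℕ → Set (Set X)}

theorem IsSeqClosedCsStarNetwork.isSeqClosureNetworkAt_sInterContaining
    (hnet : IsSeqClosedCsStarNetwork (⋃ n, F n)) (x : X) :
    IsSeqClosureNetworkAt (fun n => sInterContaining (F n) x) x :=
  hnet.isSeqClosureNetworkAt tendsto_const_nhds fun _ => Eventually.of_forall fun _ => rfl

def IsSeqClosedCsStarNetwork.code (hnet : IsSeqClosedCsStarNetwork (⋃ n, F n)) (x : X) :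
    NetworkCode X :=
  ⟨fun n => sInterContaining (F n) x, x, hnet.isSeqClosureNetworkAt_sInterContaining x⟩

theorem IsSeqClosedCsStarNetwork.limit_code [T2Space X]
    (hnet : IsSeqClosedCsStarNetwork (⋃ n, F n)) (x : X) : (hnet.code x).limit = x :=
  (hnet.isSeqClosureNetworkAt_sInterContaining x).eq_of_forall_mem
    (hnet.code x).isSeqClosureNetworkAt_limit.1

theorem IsSeqClosedCsStarNetwork.csStarContinuous_code [TopologicalSpace (Set X)]
    [DiscreteTopology (Set X)] (hnet : IsSeqClosedCsStarNetwork (⋃ n, F n))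
    (hF : ∀ n, CsFinite (F n)) : CsStarContinuous hnet.code := by
  intro y a hy
  have hK : IsCompact (univ.pi fun n => range fun k => sInterContaining (F n) (y k)) :=
    isCompact_univ_pi fun n => ((hF n).finite_range_sInterContaining hy).isCompact
  obtain ⟨c, -, φ, hφ, hc⟩ := hK.tendsto_subseq (x := fun k n => sInterContaining (F n) (y k))
    fun k => mem_univ_pi.2 fun n => mem_range_self k
  have hcoord (n : ℕ) : ∀ᶠ k in atTop, sInterContaining (F n) (y (φ k)) = c n :=
    tendsto_pi_nhds.1 hc n ((isOpen_discrete {c n}).mem_nhds rfl)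
  refine ⟨⟨c, a, hnet.isSeqClosureNetworkAt (hy.comp hφ.tendsto_atTop) hcoord⟩,
    MapClusterPt.of_comp hφ.tendsto_atTop ?_⟩
  exact (tendsto_subtype_rng.2 hc).mapClusterPt

end Converse

theorem IsSigmaCsFinite.csStarMetrizable {X : Type u} [TopologicalSpace X] [T2Space X]
    {𝒩 : Set (Set X)} (h𝒩 : IsSigmaCsFinite 𝒩) (hnet : IsSeqClosedCsStarNetwork 𝒩) :
    CsStarMetrizable X := by
  obtain ⟨F, rfl, hF⟩ := h𝒩
  let : TopologicalSpace (Set X) := ⊥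
  have : DiscreteTopology (Set X) := ⟨rfl⟩
  let : MetricSpace (ℕ → Set X) := PiNat.metricSpace
  exact ⟨NetworkCode X, inferInstance, NetworkCode.limit, hnet.code, NetworkCode.continuous_limit,
    fun x => ⟨hnet.code x, hnet.limit_code x⟩, hnet.limit_code, hnet.csStarContinuous_code hF⟩

/-- A Hausdorff space `X` is cs*-metrizable iff it has a σ-cs-finite
cl₁-osed cs*-network. -/
theorem stmt_8 {X : Type u} [TopologicalSpace X] [T2Space X] :
    CsStarMetrizable X ↔
      ∃ 𝒩 : Set (Set X),
        -- 𝒩 is a countable union of cs-finite subfamilies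
        (∃ F : ℕ → Set (Set X), 𝒩 = ⋃ n, F n ∧ ∀ n, CsFinite (F n)) ∧
        -- 𝒩 is a cl₁-osed cs*-network
        (∀ U : Set X, IsOpen U → ∀ (x : ℕ → X) (a : X),
          Tendsto x atTop (𝓝 a) → a ∈ U → (∀ n, x n ∈ U) →
          ∃ N ∈ 𝒩, seqClosure N ⊆ U ∧ {n | x n ∈ N}.Infinite) :=
  ⟨CsStarMetrizable.exists_isSigmaCsFinite_isSeqClosedCsStarNetwork,
    fun ⟨_, h𝒩, hnet⟩ => IsSigmaCsFinite.csStarMetrizable h𝒩 hnet⟩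
end

section
/- For a Hausdorff topological space X the following conditions are equivalent: (1) X is a Lašnev space, i.e. there is a metrizable space M and a continuous closed surjection f : M → X; (2) X is Fréchet–Urysohn and k*-metrizable; (3) X is Fréchet–Urysohn and cs*-metrizable. -/
open Filter Topology Set

universe u

/-!
(1) → (2): closed continuous images of Fréchet–Urysohn spaces are Fréchet–Urysohn, and any
section `s` of a closed map `f` sends compact sets to relatively compact ones. Indeed, if
`(s xₙ)` with `xₙ ∈ K` had no cluster point, every subset of `{s xₙ}` would be closed, hence
so would every subset of `{xₙ} = f {s xₙ}`, whereas `(xₙ)` clusters somewhere in `K`.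

(2) → (3): a convergent sequence together with its limit is compact.

(3) → (1): `f` restricted to the closure of `range s` is closed. If `f mⱼ → x` with
`f mⱼ ≠ x`, pick shrinking balls `Bⱼ` around `mⱼ` whose images avoid a neighbourhood of `x`.
Then `x` lies in the closure of `⋃ s⁻¹' Bⱼ`, so a sequence `wᵢ → x` from it yields, by
cs*-continuity, a cluster point of `(s wᵢ)`, which is also a cluster point of `(mⱼ)`.
-/

theorem locallyFinite_singleton_of_forall_not_mapClusterPt {Z : Type*} [TopologicalSpace Z]
    {u : ℕ → Z} (h : ∀ q, ¬MapClusterPt q atTop u) (I : Set ℕ) :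
    LocallyFinite fun n : I => ({u n} : Set Z) := by
  intro q
  obtain ⟨U, hU, hUu⟩ : ∃ U ∈ 𝓝 q, ∀ᶠ n in atTop, u n ∉ U := by
    simpa [mapClusterPt_iff_frequently, Filter.not_frequently] using h q
  refine ⟨U, hU, ?_⟩
  have hfin : {n | u n ∈ U}.Finite := by
    simpa [← Nat.cofinite_eq_atTop] using hUu
  simpa using hfin.preimage Subtype.val_injective.injOn

theorem isClosed_image_of_forall_not_mapClusterPt {Z : Type*} [TopologicalSpace Z] [T1Space Z]
    {u : ℕ → Z} (h : ∀ q, ¬MapClusterPt q atTop u) (I : Set ℕ) : IsClosed (u '' I) := by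
  rw [image_eq_range, ← iUnion_singleton_eq_range]
  exact (locallyFinite_singleton_of_forall_not_mapClusterPt h I).isClosed_iUnion
    fun _ => isClosed_singleton

theorem MapClusterPt.of_tendsto_dist {α M : Type*} [PseudoMetricSpace M] {l : Filter α}
    {u v : α → M} {q : M} (hu : MapClusterPt q l u)
    (h : Tendsto (fun i => dist (v i) (u i)) l (𝓝 0)) : MapClusterPt q l v := by
  rw [Metric.nhds_basis_ball.mapClusterPt_iff_frequently] at hu ⊢
  intro ε hε
  have hclose : ∀ᶠ i in l, dist (v i) (u i) < ε / 2 :=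
    h.eventually (gt_mem_nhds (by positivity))
  refine ((hu (ε / 2) (by positivity)).and_eventually hclose).mono fun i ⟨hui, hvi⟩ => ?_
  rw [Metric.mem_ball] at hui ⊢
  linarith [dist_triangle (v i) (u i) q]

theorem isCompact_closure_of_forall_exists_mapClusterPt_s10 {M : Type*} [MetricSpace M] {A : Set M}
    (h : ∀ u : ℕ → M, (∀ n, u n ∈ A) → ∃ q, MapClusterPt q atTop u) :
    IsCompact (closure A) := by
  refine IsSeqCompact.isCompact fun u hu => ?_
  choose v hvA hvu using fun n => Metric.mem_closure_iff.mp (hu n) (1 / (n + 1)) (by positivity)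
  obtain ⟨q, hq⟩ := h v hvA
  have hdist : Tendsto (fun n => dist (u n) (v n)) atTop (𝓝 0) :=
    squeeze_zero (fun _ => dist_nonneg) (fun n => (hvu n).le)
      tendsto_one_div_add_atTop_nhds_zero_nat
  have huq : MapClusterPt q atTop u := hq.of_tendsto_dist hdist
  obtain ⟨φ, hφ, hlim⟩ := huq.tendsto_subseq
  exact ⟨q, isClosed_closure.mem_of_mapClusterPt huq (Eventually.of_forall hu), φ, hφ, hlim⟩

theorem IsClosedMap.frechetUrysohnSpace {M X : Type*} [TopologicalSpace M] [TopologicalSpace X]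
    [FrechetUrysohnSpace M] {f : M → X} (hc : Continuous f) (hf : IsClosedMap f)
    (hsurj : Function.Surjective f) : FrechetUrysohnSpace X := by
  refine ⟨fun A a ha => ?_⟩
  rw [← image_preimage_eq A hsurj, hf.closure_image_eq_of_continuous hc] at ha
  obtain ⟨m, hm, rfl⟩ := ha
  obtain ⟨v, hvA, hv⟩ := mem_closure_iff_seq_limit.mp hm
  exact ⟨f ∘ v, hvA, (hc.tendsto m).comp hv⟩

theorem IsClosedMap.exists_mapClusterPt_comp {M X : Type*} [TopologicalSpace M] [T1Space M]
    [TopologicalSpace X] {f : M → X} {s : X → M} (hf : IsClosedMap f)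
    (hs : Function.LeftInverse f s) {x : ℕ → X} {p : X} (hp : MapClusterPt p atTop x) :
    ∃ q, MapClusterPt q atTop (s ∘ x) := by
  by_contra! hno
  obtain ⟨U, hU, hUx⟩ : ∃ U ∈ 𝓝 (s p), ∀ᶠ n in atTop, s (x n) ∉ U := by
    simpa [mapClusterPt_iff_frequently, Filter.not_frequently] using hno (s p)
  -- `x '' I = f '' ((s ∘ x) '' I)` is closed and eventually contains `x n`, yet misses `p`.
  set I := {n | x n ≠ p}
  have hI : ∀ᶠ n in atTop, n ∈ I :=
    hUx.mono fun n hn hxn => hn (hxn ▸ mem_of_mem_nhds hU)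
  have hclosed : IsClosed (x '' I) := by
    simpa only [image_image, Function.comp_apply, hs _] using
      hf _ (isClosed_image_of_forall_not_mapClusterPt hno I)
  obtain ⟨n, hn, hxn⟩ :=
    hclosed.mem_of_mapClusterPt hp (hI.mono fun n hn => mem_image_of_mem x hn)
  exact hn hxn

theorem IsClosedMap.isCompact_closure_image_section {M X : Type*} [MetricSpace M]
    [TopologicalSpace X] {f : M → X} {s : X → M} (hf : IsClosedMap f)
    (hs : Function.LeftInverse f s) {K : Set X} (hK : IsCompact K) :
    IsCompact (closure (s '' K)) := by
  refine isCompact_closure_of_forall_exists_mapClusterPt_s10 fun u hu => ?_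
  choose x hxK hxu using hu
  obtain ⟨p, -, hp⟩ :=
    hK.exists_mapClusterPt (f := atTop) (tendsto_principal.mpr (Eventually.of_forall hxK))
  rw [← funext hxu]
  exact hf.exists_mapClusterPt_comp hs hp

theorem csStarContinuous_of_isCompact_closure_image {M X : Type u} [TopologicalSpace M]
    [TopologicalSpace X] {s : X → M}
    (hs : ∀ K : Set X, IsCompact K → IsCompact (closure (s '' K))) :
    CsStarContinuous s := by
  intro y a hy
  obtain ⟨x, -, hx⟩ := (hs _ hy.isCompact_insert_range).exists_mapClusterPt (f := atTop)
    (tendsto_principal.mpr (Eventually.of_forall fun n =>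
      subset_closure (mem_image_of_mem s (mem_insert_of_mem a (mem_range_self n)))))
  exact ⟨x, hx⟩

theorem image_inter_range_section {M X : Type*} {f : M → X} {s : X → M}
    (hs : Function.LeftInverse f s) (U : Set M) : f '' (U ∩ range s) = s ⁻¹' U := by
  ext x
  constructor
  · rintro ⟨_, ⟨hU, z, rfl⟩, rfl⟩
    rwa [mem_preimage, hs z]
  · exact fun hx => ⟨s x, ⟨hx, mem_range_self x⟩, hs x⟩

theorem mem_closure_preimage_section {M X : Type*} [TopologicalSpace M] [TopologicalSpace X]
    {f : M → X} {s : X → M} (hf : Continuous f) (hs : Function.LeftInverse f s) {U : Set M}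
    (hU : IsOpen U) {m : M} (hmU : m ∈ U) (hm : m ∈ closure (range s)) :
    f m ∈ closure (s ⁻¹' U) := by
  rw [← image_inter_range_section hs]
  exact image_closure_subset_closure_image hf ⟨m, hU.inter_closure ⟨hmU, hm⟩, rfl⟩

theorem CsStarContinuous.exists_mapClusterPt_of_tendsto {M X : Type u} [MetricSpace M]
    [TopologicalSpace X] [T2Space X] [FrechetUrysohnSpace X] {f : M → X} {s : X → M}
    (hf : Continuous f) (hs : Function.LeftInverse f s) (hcs : CsStarContinuous s)
    {m : ℕ → M} (hm : ∀ j, m j ∈ closure (range s)) {x : X}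
    (hx : Tendsto (f ∘ m) atTop (𝓝 x)) (hne : ∀ j, f (m j) ≠ x) :
    ∃ q, MapClusterPt q atTop m := by
  choose V W hVo hWo hmV hxW hVW using fun j => t2_separation (hne j)
  set B : ℕ → Set M := fun j => Metric.ball (m j) (1 / (j + 1)) ∩ f ⁻¹' V j
  have hB : ∀ j, f (m j) ∈ closure (s ⁻¹' B j) := fun j =>
    mem_closure_preimage_section hf hs (Metric.isOpen_ball.inter ((hVo j).preimage hf))
      ⟨Metric.mem_ball_self (by positivity), hmV j⟩ (hm j)
  have hxB : x ∈ closure (⋃ j, s ⁻¹' B j) :=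
    isClosed_closure.mem_of_tendsto hx
      (Eventually.of_forall fun j => closure_mono (subset_iUnion _ j) (hB j))
  obtain ⟨w, hwB, hwx⟩ := mem_closure_iff_seq_limit.mp hxB
  choose J hJ using fun i => mem_iUnion.mp (hwB i)
  obtain ⟨q, hq⟩ := hcs w x hwx
  -- `w i ∈ V (J i)`, while `w` eventually lies in each `W j`, which is disjoint from `V j`.
  have hJ_tendsto : Tendsto J atTop atTop := by
    refine tendsto_atTop.2 fun N => ?_
    have hJ_ne : ∀ j ∈ Finset.range N, ∀ᶠ i in atTop, J i ≠ j := fun j _ =>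
      (hwx.eventually_mem ((hWo j).mem_nhds (hxW j))).mono fun i hi hij =>
        (hVW j).notMem_of_mem_right hi (by simpa [hij, hs (w i)] using (hJ i).2)
    filter_upwards [(Finset.range N).eventually_all.2 hJ_ne] with i hi
    by_contra! hlt
    exact hi (J i) (Finset.mem_range.2 hlt) rfl
  have hdist : Tendsto (fun i => dist (m (J i)) (s (w i))) atTop (𝓝 0) :=
    squeeze_zero (fun _ => dist_nonneg)
      (fun i => by simpa [dist_comm] using (Metric.mem_ball.mp (hJ i).1).le)
      (tendsto_one_div_add_atTop_nhds_zero_nat.comp hJ_tendsto)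
  exact ⟨q, (hq.of_tendsto_dist (v := m ∘ J) hdist).of_comp hJ_tendsto⟩

theorem CsStarContinuous.isClosedMap_restrict_closure_range {M X : Type u} [MetricSpace M]
    [TopologicalSpace X] [T2Space X] [FrechetUrysohnSpace X] {f : M → X} {s : X → M}
    (hf : Continuous f) (hs : Function.LeftInverse f s) (hcs : CsStarContinuous s) :
    IsClosedMap ((closure (range s)).domRestrict f) := by
  intro C hC
  refine closure_subset_iff_isClosed.1 fun x hx => ?_
  by_contra hxC
  obtain ⟨xs, hxsC, hxs⟩ := mem_closure_iff_seq_limit.mp hx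
  choose c hcC hcx using hxsC
  have hfc : f ∘ (fun j => (c j : M)) = xs := funext hcx
  obtain ⟨q, hq⟩ := hcs.exists_mapClusterPt_of_tendsto hf hs (fun j => (c j).2) (hfc ▸ hxs)
    fun j hj => hxC ⟨c j, hcC j, hj⟩
  obtain ⟨c₀, hc₀C, rfl⟩ : q ∈ Subtype.val '' C :=
    (isClosed_closure.isClosedMap_subtype_val C hC).mem_of_mapClusterPt hq
      (Eventually.of_forall fun j => mem_image_of_mem _ (hcC j))
  have hfq : MapClusterPt (f c₀) atTop xs := hfc ▸ hq.continuousAt_comp hf.continuousAt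
  exact hxC ⟨c₀, hc₀C, eq_of_nhds_neBot (hfq.clusterPt.mono hxs)⟩

/-- For a Hausdorff space `X` the following are equivalent:
(1) `X` is a Lašnev space (a closed continuous image of a metrizable space);
(2) `X` is Fréchet–Urysohn and k*-metrizable;
(3) `X` is Fréchet–Urysohn and cs*-metrizable. -/
theorem stmt_10 {X : Type u} [TopologicalSpace X] [T2Space X] :
    List.TFAE
      [ ∃ (M : Type u) (_ : MetricSpace M) (f : M → X),
          Continuous f ∧ IsClosedMap f ∧ Function.Surjective f,
        FrechetUrysohnSpace X ∧ KStarMetrizable X,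
        FrechetUrysohnSpace X ∧ CsStarMetrizable X ] := by
  tfae_have 1 → 2 := by
    rintro ⟨M, hM, f, hc, hf, hsurj⟩
    have hs := Function.rightInverse_surjInv hsurj
    exact ⟨hf.frechetUrysohnSpace hc hsurj, M, hM, f, Function.surjInv hsurj, hc, hsurj, hs,
      fun K hK => hf.isCompact_closure_image_section hs hK⟩
  tfae_have 2 → 3 := by
    rintro ⟨hFU, M, hM, f, s, hc, hsurj, hs, hK⟩
    exact ⟨hFU, M, hM, f, s, hc, hsurj, hs, csStarContinuous_of_isCompact_closure_image hK⟩
  tfae_have 3 → 1 := by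
    rintro ⟨hFU, M, hM, f, s, hc, -, hs, hcs⟩
    exact ⟨closure (range s), inferInstance, (closure (range s)).domRestrict f,
      hc.comp continuous_subtype_val, hcs.isClosedMap_restrict_closure_range hc hs,
      fun x => ⟨⟨s x, subset_closure (mem_range_self x)⟩, hs x⟩⟩
  tfae_finish
end

section
/- Every cs*-metrizable Hausdorff topological space X is monotonically sequentially normal: there is a function D assigning to each pair (H, K) of disjoint closed subsets of X a set D(H,K) ⊆ X such that cl₁(D(H,K)) ∩ K = ∅, cl₁(X \ D(H,K)) ∩ H = ∅, and D(H,K) ⊆ D(H',K') whenever H ⊆ H' and K ⊇ K' (for disjoint closed pairs (H,K) and (H',K')). -/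
open Filter Topology Set

universe u

open Metric

/-! With `f : M → X` and its section `s` witnessing cs*-metrizability, pull `H`, `K` back to `M`
and compare their distances from `s x`:
`D(H, K) = {x | infEDist (s x) (f⁻¹ H) < infEDist (s x) (f⁻¹ K)}`, which is monotone.
If `x ∈ K` is the limit of a sequence `u` in `D(H, K)`, the cs*-continuity of `s` gives a cluster
point `m` of `s ∘ u`, and `f m = x` because `X` is Hausdorff. Then `m ∈ f⁻¹ K`, so the inequality
`infEDist (s (u n)) (f⁻¹ H) ≤ edist (s (u n)) m` passes to the cluster point `m` and puts `m` in
the closed set `f⁻¹ H`, i.e. `x ∈ H`. The same argument with `H` and `K` swapped handles the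
complement. -/

section CloserTo

variable {X M : Type*} [PseudoEMetricSpace M]

def closerTo (g : X → M) (A B : Set M) : Set X :=
  {x | infEDist (g x) A < infEDist (g x) B}

theorem closerTo_mono {g : X → M} {A A' B B' : Set M} (hA : A ⊆ A') (hB : B' ⊆ B) :
    closerTo g A B ⊆ closerTo g A' B' := fun _ hx =>
  (infEDist_anti hA).trans_lt (hx.trans_le (infEDist_anti hB))

end CloserTo

theorem mem_closure_of_mapClusterPt_of_infEDist_le {ι M : Type*} [PseudoEMetricSpace M]
    {l : Filter ι} {v : ι → M} {m : M} {A B : Set M} (hm : MapClusterPt m l v) (hmB : m ∈ B)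
    (hle : ∀ᶠ i in l, infEDist (v i) A ≤ infEDist (v i) B) : m ∈ closure A := by
  have hclosed : IsClosed {y | infEDist y A ≤ edist y m} :=
    isClosed_le continuous_infEDist (continuous_id.edist continuous_const)
  have hev : ∀ᶠ i in l, infEDist (v i) A ≤ edist (v i) m :=
    hle.mono fun _ hi => hi.trans (infEDist_le_edist_of_mem hmB)
  have hm' : infEDist m A ≤ edist m m := hclosed.mem_of_mapClusterPt hm hev
  exact mem_closure_iff_infEDist_zero.2 (nonpos_iff_eq_zero.1 (by simpa using hm'))

theorem ClusterPt.eq_of_le_nhds {X : Type*} [TopologicalSpace X] [T2Space X] {F : Filter X}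
    {x y : X} (hy : ClusterPt y F) (hF : F ≤ 𝓝 x) : y = x := by
  by_contra hne
  exact (hy.mono hF).neBot.ne (disjoint_iff.1 (disjoint_nhds_nhds.2 hne))

theorem MapClusterPt.map_eq_of_tendsto {ι X M : Type*} [TopologicalSpace X] [T2Space X]
    [TopologicalSpace M] {f : M → X} {s : X → M} (hf : Continuous f) (hsec : ∀ x, f (s x) = x)
    {l : Filter ι} {u : ι → X} {x : X} {m : M} (hu : Tendsto u l (𝓝 x))
    (hm : MapClusterPt m l (s ∘ u)) : f m = x := by
  have hfm : MapClusterPt (f m) l (f ∘ s ∘ u) := hm.continuousAt_comp hf.continuousAt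
  simp only [Function.comp_def, hsec] at hfm
  exact ClusterPt.eq_of_le_nhds hfm hu

theorem mem_of_tendsto_of_csStarContinuous {X M : Type u} [TopologicalSpace X] [T2Space X]
    [PseudoEMetricSpace M] {f : M → X} {s : X → M} (hf : Continuous f)
    (hsec : ∀ x, f (s x) = x) (hs : CsStarContinuous s) {u : ℕ → X} {x : X} {S T : Set X}
    (hT : IsClosed T) (hu : Tendsto u atTop (𝓝 x)) (hxS : x ∈ S)
    (hle : ∀ᶠ n in atTop, infEDist (s (u n)) (f ⁻¹' T) ≤ infEDist (s (u n)) (f ⁻¹' S)) :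
    x ∈ T := by
  obtain ⟨m, hm⟩ := hs u x hu
  have hfm : f m = x := MapClusterPt.map_eq_of_tendsto hf hsec hu hm
  have hmT : m ∈ closure (f ⁻¹' T) :=
    mem_closure_of_mapClusterPt_of_infEDist_le hm (by simpa [hfm] using hxS) hle
  rw [(hT.preimage hf).closure_eq, mem_preimage, hfm] at hmT
  exact hmT

section Separation

variable {X M : Type u} [TopologicalSpace X] [T2Space X] [PseudoEMetricSpace M] {f : M → X}
  {s : X → M} {H K : Set X}

theorem seqClosure_closerTo_inter_eq_empty (hf : Continuous f) (hsec : ∀ x, f (s x) = x)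
    (hs : CsStarContinuous s) (hH : IsClosed H) (hHK : Disjoint H K) :
    seqClosure (closerTo s (f ⁻¹' H) (f ⁻¹' K)) ∩ K = ∅ := by
  refine eq_empty_of_forall_notMem fun x ⟨⟨u, hD, hu⟩, hxK⟩ => ?_
  have hxH : x ∈ H := mem_of_tendsto_of_csStarContinuous hf hsec hs hH hu hxK
    (Eventually.of_forall fun n => (hD n).le)
  exact disjoint_left.1 hHK hxH hxK

theorem seqClosure_compl_closerTo_inter_eq_empty (hf : Continuous f) (hsec : ∀ x, f (s x) = x)
    (hs : CsStarContinuous s) (hK : IsClosed K) (hHK : Disjoint H K) :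
    seqClosure ((closerTo s (f ⁻¹' H) (f ⁻¹' K))ᶜ) ∩ H = ∅ := by
  refine eq_empty_of_forall_notMem fun x ⟨⟨u, hD, hu⟩, hxH⟩ => ?_
  have hxK : x ∈ K := mem_of_tendsto_of_csStarContinuous hf hsec hs hK hu hxH
    (Eventually.of_forall fun n => not_lt.1 (hD n))
  exact disjoint_left.1 hHK hxH hxK

end Separation

/-- Every cs*-metrizable Hausdorff space is monotonically sequentially
normal. -/
theorem stmt_13 {X : Type u} [TopologicalSpace X] [T2Space X]
    (h : CsStarMetrizable X) :
    ∃ D : Set X → Set X → Set X,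
      (∀ H K : Set X, IsClosed H → IsClosed K → Disjoint H K →
        seqClosure (D H K) ∩ K = ∅ ∧ seqClosure ((D H K)ᶜ) ∩ H = ∅) ∧
      (∀ H K H' K' : Set X,
        IsClosed H → IsClosed K → Disjoint H K →
        IsClosed H' → IsClosed K' → Disjoint H' K' →
        H ⊆ H' → K' ⊆ K → D H K ⊆ D H' K') := by
  obtain ⟨M, _, f, s, hf, -, hsec, hs⟩ := h
  refine ⟨fun H K => closerTo s (f ⁻¹' H) (f ⁻¹' K), fun H K hH hK hHK => ⟨?_, ?_⟩,
    fun H K H' K' _ _ _ _ _ _ hHH' hK'K => closerTo_mono (preimage_mono hHH') (preimage_mono hK'K)⟩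
  · exact seqClosure_closerTo_inter_eq_empty hf hsec hs hH hHK
  · exact seqClosure_compl_closerTo_inter_eq_empty hf hsec hs hK hHK
end

section
/- For each cs*-metrizable Hausdorff topological space X there is a function G assigning to each n ∈ ℕ and each closed set F ⊆ X a set G(n,F) ⊆ X such that: each G(n,F) is a sequential barrier for F, i.e. for every sequence (x_k) in X converging to a point of F all but finitely many x_k lie in G(n,F); F = ⋂_{n∈ℕ} G(n,F) for every closed F; and G(n,F) ⊆ G(n,K) whenever F ⊆ K are closed sets. -/
/-!
Take `f : M → X` and its cs*-continuous section `s`, and let `G n F` be the `s`-preimage of the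
`1/(n+1)`-thickening of `f⁻¹' F` in `M`. If `x k → a ∈ F`, every subsequence of `s ∘ x` has a
cluster point `m`; continuity of `f` and uniqueness of limits give `f m = a`, so `m ∈ f⁻¹' F` and
the subsequence meets the thickening. Hence `G n F` is a sequential barrier for `F`. Since `f⁻¹' F`
is closed, the thickenings shrink to it, and `s⁻¹' (f⁻¹' F) = F`.
-/

open Filter Topology Set

universe u

open Metric

def IsSeqBarrier {X : Type*} [TopologicalSpace X] (U F : Set X) : Prop :=
  ∀ (x : ℕ → X) (a : X), a ∈ F → Tendsto x atTop (𝓝 a) → ∀ᶠ k in atTop, x k ∈ U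

theorem IsClosed.iInter_thickening_one_div_eq {α : Type*} [PseudoMetricSpace α] {E : Set α}
    (hE : IsClosed E) : ⋂ n : ℕ, thickening (1 / (n + 1)) E = E := by
  have hradii : ∀ ε : ℝ, 0 < ε → (range (fun n : ℕ => 1 / ((n : ℝ) + 1)) ∩ Ioc 0 ε).Nonempty := by
    intro ε hε
    obtain ⟨n, hn⟩ := exists_nat_one_div_lt hε
    exact ⟨_, mem_range_self n, by positivity, hn.le⟩
  have hpos : range (fun n : ℕ => 1 / ((n : ℝ) + 1)) ⊆ Ioi 0 := by
    rintro _ ⟨n, rfl⟩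
    exact Nat.one_div_pos_of_nat (α := ℝ)
  have := closure_eq_iInter_thickening' E _ hpos hradii
  rwa [biInter_range, hE.closure_eq, eq_comm] at this

namespace CsStarContinuous

variable {X M : Type u} [TopologicalSpace X] [TopologicalSpace M] {f : M → X} {s : X → M}

theorem exists_mapClusterPt_of_tendsto_s14 [T2Space X] (hs : CsStarContinuous s)
    (hf : Continuous f) (hfs : Function.LeftInverse f s) {x : ℕ → X} {a : X}
    (hx : Tendsto x atTop (𝓝 a)) : ∃ m, f m = a ∧ MapClusterPt m atTop (s ∘ x) := by
  obtain ⟨m, hm⟩ := hs x a hx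
  have hfm : MapClusterPt (f m) atTop (f ∘ s ∘ x) := hm.continuousAt_comp hf.continuousAt
  rw [← Function.comp_assoc, hfs.comp_eq_id, Function.id_comp] at hfm
  exact ⟨m, eq_of_nhds_neBot (hfm.clusterPt.mono hx), hm⟩

theorem isSeqBarrier_preimage [T2Space X] (hs : CsStarContinuous s) (hf : Continuous f)
    (hfs : Function.LeftInverse f s) {F : Set X} {V : Set M} (hV : IsOpen V)
    (hFV : f ⁻¹' F ⊆ V) : IsSeqBarrier (s ⁻¹' V) F := by
  intro x a ha hx
  by_contra hcon
  obtain ⟨φ, hφ, hφV⟩ := extraction_of_frequently_atTop (not_eventually.mp hcon)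
  obtain ⟨m, rfl, hm⟩ :=
    hs.exists_mapClusterPt_of_tendsto_s14 hf hfs (hx.comp hφ.tendsto_atTop)
  obtain ⟨j, hj⟩ := (hm.frequently (hV.mem_nhds (hFV ha))).exists
  exact hφV j hj

end CsStarContinuous

/-- For each cs*-metrizable Hausdorff space there is a monotone
semi-stratification by sequential barriers. -/
theorem stmt_14 {X : Type u} [TopologicalSpace X] [T2Space X]
    (h : CsStarMetrizable X) :
    ∃ G : ℕ → Set X → Set X,
      -- each G n F is a sequential barrier for the closed set F
      (∀ (n : ℕ) (F : Set X), IsClosed F →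
        ∀ (x : ℕ → X) (a : X), a ∈ F → Tendsto x atTop (𝓝 a) →
          ∀ᶠ k in atTop, x k ∈ G n F) ∧
      -- F is the intersection of the G n F
      (∀ F : Set X, IsClosed F → F = ⋂ n, G n F) ∧
      -- monotonicity
      (∀ (n : ℕ) (F K : Set X), IsClosed F → IsClosed K → F ⊆ K →
        G n F ⊆ G n K) := by
  obtain ⟨M, _, f, s, hf, -, hfs, hs⟩ := h
  refine ⟨fun n F => s ⁻¹' thickening (1 / (n + 1)) (f ⁻¹' F), ?_, ?_, ?_⟩
  · intro n F _
    exact hs.isSeqBarrier_preimage hf hfs isOpen_thickening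
      (self_subset_thickening (by positivity) _)
  · intro F hF
    rw [← preimage_iInter, (hF.preimage hf).iInter_thickening_one_div_eq,
      Function.LeftInverse.preimage_preimage hfs]
  · intro n F K _ _ hFK
    exact preimage_mono (thickening_subset_of_subset _ (preimage_mono hFK))
end
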